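/- Let c₁, c₂ > 0, ω > 0, t_i < s, Q = exp(-(c₁/ω)(1 - e^{-ω(s - t_i)})), and let λ(t) = c₁·e^{-ω(t - t_i)} for t_i ≤ t < s and λ(t) = c₂·e^{-ω(t - s)} for t ≥ s. Define F(t) = 1 - exp(-∫_{t_i}^t λ(τ)dτ). Then for any u with F(s) ≤ u < 1 and 1 + (ω/c₂)·log((1-u)/Q) > 0, the value t = s - (1/ω)·log(1 + (ω/c₂)·log((1 - u)/Q)) satisfies exp(-∫_{t_i}^{s} c₁e^{-ω(τ-t_i)}dτ)·exp(-∫_{s}^{t} c₂e^{-ω(τ-s)}dτ) = 1 - u. -/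

import Mathlib

open Real

lemma integral_exp_decay (c ω a b : ℝ) (hω : ω ≠ 0) :
    ∫ τ in a..b, c * Real.exp (-ω * (τ - a))
      = (c / ω) * (1 - Real.exp (-ω * (b - a))) := by
  have h : ∀ τ ∈ Set.uIcc a b,
      HasDerivAt (fun τ => -(c / ω) * Real.exp (-ω * (τ - a)))
        (c * Real.exp (-ω * (τ - a))) τ := by
    intro τ _
    have h1 : HasDerivAt (fun τ : ℝ => -ω * (τ - a)) (-ω) τ := by
      simpa using ((hasDerivAt_id τ).sub_const a).const_mul (-ω)
    have h2 := (h1.exp).const_mul (-(c / ω))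
    refine h2.congr_deriv ?_
    field_simp
  rw [intervalIntegral.integral_eq_sub_of_hasDerivAt h
    (by apply Continuous.intervalIntegrable; continuity)]
  simp
  ring

theorem refined_inverse_cdf_correct (c₁ c₂ ω tᵢ s u : ℝ)
    (hc₁ : 0 < c₁) (hc₂ : 0 < c₂) (hω : 0 < ω) (hts : tᵢ < s)
    (Q : ℝ) (hQ : Q = Real.exp (-(c₁ / ω) * (1 - Real.exp (-ω * (s - tᵢ)))))
    (hu₁ : 1 - Q ≤ u) (hu₂ : u < 1)
    (hdom : 0 < 1 + (ω / c₂) * Real.log ((1 - u) / Q)) :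
    Real.exp (-∫ τ in tᵢ..s, c₁ * Real.exp (-ω * (τ - tᵢ))) *
      Real.exp (-∫ τ in s..(s - (1 / ω) * Real.log (1 + (ω / c₂) * Real.log ((1 - u) / Q))),
        c₂ * Real.exp (-ω * (τ - s))) = 1 - u := by
  have hωne : ω ≠ 0 := ne_of_gt hω
  have hQpos : 0 < Q := hQ ▸ Real.exp_pos _
  have h1u : 0 < 1 - u := by linarith
  set L := Real.log ((1 - u) / Q) with hL
  set t := s - (1 / ω) * Real.log (1 + (ω / c₂) * L) with ht
  rw [integral_exp_decay c₁ ω tᵢ s hωne, integral_exp_decay c₂ ω s t hωne]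
  have hexp1 : Real.exp (-((c₁ / ω) * (1 - Real.exp (-ω * (s - tᵢ))))) = Q := by
    rw [hQ]; ring_nf
  have hexp2 : Real.exp (-ω * (t - s)) = 1 + (ω / c₂) * L := by
    have : -ω * (t - s) = Real.log (1 + (ω / c₂) * L) := by
      rw [ht]; field_simp; ring
    rw [this, Real.exp_log hdom]
  rw [hexp1, hexp2]
  have : -((c₂ / ω) * (1 - (1 + (ω / c₂) * L))) = L := by field_simp; ring
  rw [this, hL, Real.exp_log (by positivity)]
  field_simp
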